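/- If the administrator invests nothing, π_{n+1} = 0, then Σ_{j=1}^{n} E[W_j] = (1+R)·(Σ_{j=1}^{n} π_j)·P[I_{n+1} = 0] < (1+R)·Σ_{j=1}^{n} π_j; consequently the tontine fund cannot be actuarially fair for every participant, and there exists at least one participant i with E[W_i] < π_i·(1+R). -/

import Mathlib

open MeasureTheory Finset

/-! When at least one participant survives, the administrator's indicator vanishes and the
participants split the whole fund; when nobody survives, they receive nothing. Hence the
participants' payouts add up to `(1 + R) · Σ π_j · 1{I_{n+1} = 0}`, whose expectation
`(1 + R) · Σ π_j · P[I_{n+1} = 0]` falls short of the total premium `(1 + R) · Σ π_j` because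
`P[I_{n+1} = 1] > 0`; so some participant is paid less than their premium in expectation. -/

section TontineShare

lemma nonneg_of_eq_zero_or_eq_one {a : ℝ} (h : a = 0 ∨ a = 1) : 0 ≤ a := by
  rcases h with rfl | rfl <;> norm_num

variable {ι : Type*} [Fintype ι] {f x : ι → ℝ}

/-- Participant `i`'s fraction of the fund; `c` is the administrator's tontine share and
`∏ j, (1 - x j)` its survival indicator. -/
noncomputable def tontineShare (f : ι → ℝ) (c : ℝ) (x : ι → ℝ) (i : ι) : ℝ :=
  f i * x i / (∑ j, f j * x j + c * ∏ j, (1 - x j))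

lemma prod_one_sub_eq_zero_or_eq_one (hx : ∀ j, x j = 0 ∨ x j = 1) :
    ∏ j, (1 - x j) = 0 ∨ ∏ j, (1 - x j) = 1 := by
  refine prod_induction _ (fun p => p = 0 ∨ p = 1) ?_ (Or.inr rfl) fun j _ => ?_
  · rintro a b (rfl | rfl) (rfl | rfl) <;> simp
  · rcases hx j with h | h <;> simp [h]

lemma tontineShare_eq_div_sum (hx : ∀ j, x j = 0 ∨ x j = 1) (c : ℝ) (i : ι) :
    tontineShare f c x i = f i * x i / ∑ j, f j * x j := by
  by_cases h : ∃ j, x j = 1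
  · obtain ⟨j, hj⟩ := h
    rw [tontineShare, prod_eq_zero (mem_univ j) (by rw [hj, sub_self]), mul_zero, add_zero]
  · push Not at h
    simp [tontineShare, (hx i).resolve_right (h i)]

lemma tontineShare_nonneg (hf : ∀ j, 0 ≤ f j) (hx : ∀ j, x j = 0 ∨ x j = 1) (c : ℝ) (i : ι) :
    0 ≤ tontineShare f c x i := by
  have hfx : ∀ j, 0 ≤ f j * x j :=
    fun j => mul_nonneg (hf j) (nonneg_of_eq_zero_or_eq_one (hx j))
  rw [tontineShare_eq_div_sum hx]
  exact div_nonneg (hfx i) (sum_nonneg fun j _ => hfx j)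

lemma tontineShare_le_one (hf : ∀ j, 0 ≤ f j) (hx : ∀ j, x j = 0 ∨ x j = 1) (c : ℝ) (i : ι) :
    tontineShare f c x i ≤ 1 := by
  have hfx : ∀ j, 0 ≤ f j * x j :=
    fun j => mul_nonneg (hf j) (nonneg_of_eq_zero_or_eq_one (hx j))
  rw [tontineShare_eq_div_sum hx]
  exact div_le_one_of_le₀ (single_le_sum (fun j _ => hfx j) (mem_univ i))
    (sum_nonneg fun j _ => hfx j)

lemma sum_tontineShare (hf : ∀ j, 0 < f j) (hx : ∀ j, x j = 0 ∨ x j = 1) (c : ℝ) :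
    ∑ i, tontineShare f c x i = 1 - ∏ j, (1 - x j) := by
  simp_rw [tontineShare_eq_div_sum hx, ← sum_div]
  by_cases h : ∃ j, x j = 1
  · obtain ⟨j, hj⟩ := h
    have hpos : 0 < ∑ k, f k * x k :=
      sum_pos' (fun k _ => mul_nonneg (hf k).le (nonneg_of_eq_zero_or_eq_one (hx k)))
        ⟨j, mem_univ j, by simp [hj, hf j]⟩
    rw [div_self hpos.ne', prod_eq_zero (mem_univ j) (by rw [hj, sub_self]), sub_zero]
  · push Not at h
    simp [fun j => (hx j).resolve_right (h j)]

end TontineShare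

section Expectation

variable {Ω ι : Type*} [MeasurableSpace Ω] {P : Measure Ω} [Fintype ι]

lemma integral_one_sub_eq_measureReal {g : Ω → ℝ} (hg : Measurable g)
    (h01 : ∀ ω, g ω = 0 ∨ g ω = 1) :
    ∫ ω, 1 - g ω ∂P = P.real {ω | g ω = 0} := by
  have hind : (fun ω => 1 - g ω) = {ω | g ω = 0}.indicator 1 := by
    funext ω
    rcases h01 ω with h | h <;> simp [h]
  rw [hind]
  exact integral_indicator_one (hg (measurableSet_singleton 0))

lemma measureReal_setOf_eq_zero_lt_one [IsProbabilityMeasure P] {g : Ω → ℝ} (hg : Measurable g)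
    (hpos : 0 < P {ω | g ω = 1}) :
    P.real {ω | g ω = 0} < 1 := by
  have hpos' : 0 < P.real {ω | g ω = 1} := ENNReal.toReal_pos hpos.ne' (measure_ne_top _ _)
  calc P.real {ω | g ω = 0}
      ≤ P.real {ω | g ω = 1}ᶜ := measureReal_mono fun ω (h : g ω = 0) (h' : g ω = 1) => by
        simp [h] at h'
    _ = 1 - P.real {ω | g ω = 1} := probReal_compl_eq_one_sub (hg (measurableSet_singleton 1))
    _ < 1 := by linarith

variable {f : ι → ℝ} {X : ι → Ω → ℝ}

lemma measurable_tontineShare (hX : ∀ j, Measurable (X j)) (c : ℝ) (i : ι) :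
    Measurable fun ω => tontineShare f c (fun j => X j ω) i := by
  unfold tontineShare
  fun_prop

lemma integrable_tontineShare [IsFiniteMeasure P] (hf : ∀ j, 0 ≤ f j)
    (hX01 : ∀ j ω, X j ω = 0 ∨ X j ω = 1) (hX : ∀ j, Measurable (X j)) (c : ℝ) (i : ι) :
    Integrable (fun ω => tontineShare f c (fun j => X j ω) i) P := by
  refine .of_bound (measurable_tontineShare hX c i).aestronglyMeasurable 1 (ae_of_all _ ?_)
  intro ω
  have hx : ∀ j, X j ω = 0 ∨ X j ω = 1 := fun j => hX01 j ω
  rw [Real.norm_of_nonneg (tontineShare_nonneg hf hx c i)]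
  exact tontineShare_le_one hf hx c i

lemma sum_integral_tontineShare [IsFiniteMeasure P] (hf : ∀ j, 0 < f j)
    (hX01 : ∀ j ω, X j ω = 0 ∨ X j ω = 1) (hX : ∀ j, Measurable (X j)) (c : ℝ) :
    ∑ i, ∫ ω, tontineShare f c (fun j => X j ω) i ∂P =
      P.real {ω | ∏ j, (1 - X j ω) = 0} := by
  have hx : ∀ ω j, X j ω = 0 ∨ X j ω = 1 := fun ω j => hX01 j ω
  rw [← integral_finsetSum _ fun i _ => integrable_tontineShare (fun j => (hf j).le) hX01 hX c i]
  simp_rw [sum_tontineShare hf (hx _)]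
  exact integral_one_sub_eq_measureReal (by fun_prop)
    fun ω => prod_one_sub_eq_zero_or_eq_one (hx ω)

end Expectation

theorem tontine_zero_administrator_investment_unfair_general
    {Ω : Type*} [MeasurableSpace Ω] (P : Measure Ω) [IsProbabilityMeasure P]
    (n : ℕ) (hn : 1 ≤ n)
    (I : Fin n → Ω → ℝ) (hI01 : ∀ j ω, I j ω = 0 ∨ I j ω = 1)
    (hImeas : ∀ j, Measurable (I j))
    (Iadm : Ω → ℝ) (hIadm : ∀ ω, Iadm ω = ∏ j, (1 - I j ω))
    (hadm0 : 0 < P {ω | Iadm ω = 1})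
    (π : Fin n → ℝ) (hπ : ∀ j, 0 < π j) (πadm : ℝ) (hπadm : πadm = 0)
    (f : Fin n → ℝ) (hf : ∀ j, 0 < f j) (fadm : ℝ)
    (R : ℝ) (hR : 0 ≤ R)
    (W : Fin n → Ω → ℝ)
    (hW : ∀ i ω, W i ω =
      (1 + R) * ((∑ j, π j) + πadm) * (f i * I i ω) /
        ((∑ j, f j * I j ω) + fadm * Iadm ω)) :
    (∑ j, ∫ ω, W j ω ∂P) =
      (1 + R) * (∑ j, π j) * (P {ω | Iadm ω = 0}).toReal ∧
    (∑ j, ∫ ω, W j ω ∂P) < (1 + R) * (∑ j, π j) ∧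
    ¬ (∀ i, π i * (1 + R) = ∫ ω, W i ω ∂P) ∧
    ∃ i, ∫ ω, W i ω ∂P < π i * (1 + R) := by
  have hWshare : ∀ i,
      W i = fun ω => (1 + R) * (∑ j, π j) * tontineShare f fadm (fun j => I j ω) i :=
    fun i => funext fun ω => by rw [hW, hIadm, hπadm, add_zero, tontineShare, mul_div_assoc]
  have hIadm_eq : Iadm = fun ω => ∏ j, (1 - I j ω) := funext hIadm
  have hsum : ∑ j, ∫ ω, W j ω ∂P = (1 + R) * (∑ j, π j) * P.real {ω | Iadm ω = 0} := by
    simp_rw [hWshare, integral_const_mul, ← mul_sum, sum_integral_tontineShare hf hI01 hImeas,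
      hIadm_eq]
  have hpayout_pos : 0 < (1 + R) * ∑ j, π j :=
    mul_pos (by linarith) (sum_pos (fun j _ => hπ j) (univ_nonempty_iff.mpr ⟨⟨0, hn⟩⟩))
  have hlt : ∑ j, ∫ ω, W j ω ∂P < ∑ j, π j * (1 + R) := by
    rw [hsum, ← sum_mul, mul_comm _ (1 + R)]
    exact mul_lt_of_lt_one_right hpayout_pos
      (measureReal_setOf_eq_zero_lt_one (hIadm_eq ▸ by fun_prop) hadm0)
  obtain ⟨i, -, hi⟩ := exists_lt_of_sum_lt hlt
  exact ⟨hsum, by rwa [← sum_mul, mul_comm] at hlt, fun hfair => (hfair i ▸ hi).false, i, hi⟩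

/-- If the administrator invests nothing (`π_{n+1} = 0`), then
`Σ_{j=1}^n E[W_j] = (1+R)·(Σ_{j=1}^n π_j)·P[I_{n+1}=0] < (1+R)·Σ_{j=1}^n π_j`;
consequently the fund cannot be actuarially fair for every participant, and there is at
least one participant `i` with `E[W_i] < π_i·(1+R)`. -/
theorem tontine_zero_administrator_investment_unfair
    {Ω : Type*} [MeasurableSpace Ω] (P : Measure Ω) [IsProbabilityMeasure P]
    (n : ℕ) (hn : 1 ≤ n)
    (I : Fin n → Ω → ℝ) (hI01 : ∀ j ω, I j ω = 0 ∨ I j ω = 1)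
    (hImeas : ∀ j, Measurable (I j))
    (Iadm : Ω → ℝ) (hIadm : ∀ ω, Iadm ω = ∏ j, (1 - I j ω))
    (hadm0 : 0 < P {ω | Iadm ω = 1}) (hadm1 : P {ω | Iadm ω = 1} < 1)
    (π : Fin n → ℝ) (hπ : ∀ j, 0 < π j) (πadm : ℝ) (hπadm : πadm = 0)
    (f : Fin n → ℝ) (hf : ∀ j, 0 < f j) (fadm : ℝ) (hfadm : 0 < fadm)
    (R : ℝ) (hR : 0 ≤ R)
    (W : Fin n → Ω → ℝ)
    (hW : ∀ i ω, W i ω =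
      (1 + R) * ((∑ j, π j) + πadm) * (f i * I i ω) /
        ((∑ j, f j * I j ω) + fadm * Iadm ω)) :
    (∑ j, ∫ ω, W j ω ∂P) =
      (1 + R) * (∑ j, π j) * (P {ω | Iadm ω = 0}).toReal ∧
    (∑ j, ∫ ω, W j ω ∂P) < (1 + R) * (∑ j, π j) ∧
    ¬ (∀ i, π i * (1 + R) = ∫ ω, W i ω ∂P) ∧
    ∃ i, ∫ ω, W i ω ∂P < π i * (1 + R) :=
  tontine_zero_administrator_investment_unfair_general P n hn I hI01 hImeas Iadm hIadm hadm0 π hπ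
    πadm hπadm f hf fadm R hR W hW
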